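/- The real dimension of the kernel of the tangent map of μ equals the multiplicity of the eigenvalue 1 of the Berezin transform: the real vector space {v : n×n complex matrices | v * uᴴ + u * vᴴ = 0 and Re(v k l * conj (u k l)) = 0 for all k, l} has real dimension equal to the complex dimension of the subspace {f : Fin n × Fin n → ℂ | C_u f = D_u f}. -/

import Mathlib

/-!
A vector `v` in the kernel of `μ_*` at `u` has `v k l / u k l` purely imaginary, so
`v = I • (t ⊙ u)` for a unique real symbol `t`, and for such `v` the tangency condition reads
`v * uᴴ + u * vᴴ = I • (C_u - D_u) t`. Hence the kernel of `μ_*` is isomorphic to the space of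
real solutions of `C_u t = D_u t`. Since `(C_u - D_u) (conj f) = -((C_u - D_u) f)ᴴ`, the
complex solution space is stable under conjugation, so it is the complexification of its real
points and its complex dimension is their real dimension.
-/

open Finset Matrix

/-- The symbol-to-operator map `C_u` as a complex-linear map. -/
noncomputable def CL {ι : Type*} [Fintype ι] (u : Matrix ι ι ℂ) :
    ((ι × ι) → ℂ) →ₗ[ℂ] Matrix ι ι ℂ where
  toFun f := fun k k' => ∑ l, u k l * f (k, l) * (starRingEnd ℂ) (u k' l)
  map_add' f g := by
    funext k k'
    simp [mul_add, add_mul, Finset.sum_add_distrib]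
    rfl
  map_smul' c f := by
    funext k k'
    simp only [Pi.smul_apply, smul_eq_mul, RingHom.id_apply, Matrix.smul_apply]
    change _ = c * ∑ l, u k l * f (k, l) * (starRingEnd ℂ) (u k' l)
    rw [Finset.mul_sum]
    exact Finset.sum_congr rfl fun l _ => by ring

/-- The symbol-to-operator map `D_u` as a complex-linear map. -/
noncomputable def DL {ι : Type*} [Fintype ι] (u : Matrix ι ι ℂ) :
    ((ι × ι) → ℂ) →ₗ[ℂ] Matrix ι ι ℂ where
  toFun f := fun k k' => ∑ l, u k l * f (k', l) * (starRingEnd ℂ) (u k' l)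
  map_add' f g := by
    funext k k'
    simp [mul_add, add_mul, Finset.sum_add_distrib]
    rfl
  map_smul' c f := by
    funext k k'
    simp only [Pi.smul_apply, smul_eq_mul, RingHom.id_apply, Matrix.smul_apply]
    change _ = c * ∑ l, u k l * f (k', l) * (starRingEnd ℂ) (u k' l)
    rw [Finset.mul_sum]
    exact Finset.sum_congr rfl fun l _ => by ring

/-- The real-linear map whose kernel is the tangent space at `u` to the unitary group,
`v ↦ v * uᴴ + u * vᴴ`. -/
noncomputable def tanU {ι : Type*} [Fintype ι] [DecidableEq ι] (u : Matrix ι ι ℂ) :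
    Matrix ι ι ℂ →ₗ[ℝ] Matrix ι ι ℂ where
  toFun v := v * uᴴ + u * vᴴ
  map_add' v w := by
    simp [Matrix.add_mul, Matrix.mul_add, Matrix.conjTranspose_add]
    abel
  map_smul' c v := by
    simp [Matrix.smul_mul, Matrix.mul_smul, smul_add]

/-- The real-linear tangent map of `μ : (u k l) ↦ (|u k l|²)` at `u` (up to a factor of 2),
`v ↦ ((k,l) ↦ Re (v k l * conj (u k l)))`. -/
noncomputable def tanMu {ι : Type*} [Fintype ι] (u : Matrix ι ι ℂ) :
    Matrix ι ι ℂ →ₗ[ℝ] (ι × ι → ℝ) where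
  toFun v := fun p => (v p.1 p.2 * (starRingEnd ℂ) (u p.1 p.2)).re
  map_add' v w := by
    funext p
    simp [Matrix.add_apply, add_mul]
  map_smul' c v := by
    funext p
    simp [Matrix.smul_apply, Complex.real_smul, Complex.ofReal_mul, mul_assoc]
noncomputable def ofRealPi (ι : Type*) : (ι → ℝ) →ₗ[ℝ] (ι → ℂ) :=
  Complex.ofRealAm.toLinearMap.compLeft ι

@[simp]
lemma ofRealPi_apply {ι : Type*} (t : ι → ℝ) (i : ι) : ofRealPi ι t i = t i := rfl

noncomputable def Submodule.realPoints {ι : Type*} (K : Submodule ℂ (ι → ℂ)) :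
    Submodule ℝ (ι → ℝ) :=
  (K.restrictScalars ℝ).comap (ofRealPi ι)

section RealPoints

variable {ι : Type*} {K : Submodule ℂ (ι → ℂ)}

lemma Submodule.re_mem_realPoints (hK : ∀ f ∈ K, star f ∈ K) {f : ι → ℂ} (hf : f ∈ K) :
    (fun i => (f i).re) ∈ K.realPoints := by
  have : ofRealPi ι (fun i => (f i).re) = (2 : ℂ)⁻¹ • (f + star f) := by
    funext i
    simp only [ofRealPi_apply, Pi.smul_apply, Pi.add_apply, Pi.star_apply, Complex.star_def,
      Complex.add_conj, smul_eq_mul]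
    push_cast
    ring
  change ofRealPi ι _ ∈ K
  rw [this]
  exact K.smul_mem _ (K.add_mem hf (hK f hf))

lemma Submodule.im_mem_realPoints (hK : ∀ f ∈ K, star f ∈ K) {f : ι → ℂ} (hf : f ∈ K) :
    (fun i => (f i).im) ∈ K.realPoints := by
  have : ofRealPi ι (fun i => (f i).im) = (2 * Complex.I)⁻¹ • (f - star f) := by
    funext i
    simp only [ofRealPi_apply, Pi.smul_apply, Pi.sub_apply, Pi.star_apply, Complex.star_def,
      Complex.sub_conj, smul_eq_mul]
    field_simp
    push_cast
    ring
  change ofRealPi ι _ ∈ K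
  rw [this]
  exact K.smul_mem _ (K.sub_mem hf (hK f hf))

lemma Submodule.ofReal_add_I_smul_mem {s t : ι → ℝ} (hs : s ∈ K.realPoints)
    (ht : t ∈ K.realPoints) : ofRealPi ι s + Complex.I • ofRealPi ι t ∈ K :=
  K.add_mem hs (K.smul_mem _ ht)

noncomputable def Submodule.equivRealPointsProd (hK : ∀ f ∈ K, star f ∈ K) :
    K ≃ₗ[ℝ] K.realPoints × K.realPoints where
  toFun f := (⟨_, re_mem_realPoints hK f.2⟩, ⟨_, im_mem_realPoints hK f.2⟩)
  invFun p := ⟨_, ofReal_add_I_smul_mem p.1.2 p.2.2⟩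
  map_add' f g := by ext <;> simp
  map_smul' c f := by ext <;> simp
  left_inv f := by ext; simp [Complex.re_add_im, mul_comm Complex.I]
  right_inv p := by ext <;> simp

theorem Submodule.finrank_realPoints [Finite ι] (hK : ∀ f ∈ K, star f ∈ K) :
    Module.finrank ℝ K.realPoints = Module.finrank ℂ K := by
  have h := (equivRealPointsProd hK).finrank_eq
  rw [Module.finrank_prod, ← Module.finrank_mul_finrank ℝ ℂ K, Complex.finrank_real_complex] at h
  omega

end RealPoints

section Berezin

variable {ι : Type*} [Fintype ι] (u : Matrix ι ι ℂ)

lemma CL_apply (f : ι × ι → ℂ) (k k' : ι) :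
    CL u f k k' = ∑ l, u k l * f (k, l) * starRingEnd ℂ (u k' l) := rfl

lemma DL_apply (f : ι × ι → ℂ) (k k' : ι) :
    DL u f k k' = ∑ l, u k l * f (k', l) * starRingEnd ℂ (u k' l) := rfl

lemma CL_sub_DL_apply (f : ι × ι → ℂ) (k k' : ι) :
    (CL u - DL u) f k k' = ∑ l, u k l * (f (k, l) - f (k', l)) * starRingEnd ℂ (u k' l) := by
  simp only [LinearMap.sub_apply, Matrix.sub_apply, CL_apply, DL_apply, ← Finset.sum_sub_distrib,
    mul_sub, sub_mul]

lemma CL_sub_DL_star (f : ι × ι → ℂ) : (CL u - DL u) (star f) = -((CL u - DL u) f)ᴴ := by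
  ext k k'
  simp only [CL_sub_DL_apply, Matrix.neg_apply, Matrix.conjTranspose_apply, star_sum,
    ← Finset.sum_neg_distrib, Pi.star_apply, star_mul', star_sub, Complex.star_def,
    Complex.conj_conj]
  exact Finset.sum_congr rfl fun l _ => by ring

lemma star_mem_ker_CL_sub_DL {f : ι × ι → ℂ} (hf : f ∈ LinearMap.ker (CL u - DL u)) :
    star f ∈ LinearMap.ker (CL u - DL u) := by
  rw [LinearMap.mem_ker] at hf ⊢
  rw [CL_sub_DL_star, hf, conjTranspose_zero, neg_zero]

end Berezin

section Tangent

variable {ι : Type*} (u : Matrix ι ι ℂ)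

noncomputable def iHadamard : (ι × ι → ℝ) →ₗ[ℝ] Matrix ι ι ℂ where
  toFun t := Complex.I • (Matrix.of fun k l => (t (k, l) : ℂ)) ⊙ u
  map_add' t s := by ext; simp [add_mul, mul_add]
  map_smul' c t := by ext; simp [mul_assoc, mul_left_comm]

lemma iHadamard_apply (t : ι × ι → ℝ) (k l : ι) :
    iHadamard u t k l = Complex.I * t (k, l) * u k l := by
  simp [iHadamard, mul_assoc]

lemma iHadamard_injective (hne : ∀ k l, u k l ≠ 0) : Function.Injective (iHadamard u) := by
  rw [← LinearMap.ker_eq_bot, LinearMap.ker_eq_bot']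
  intro t ht
  funext ⟨k, l⟩
  have h := congrFun (congrFun ht k) l
  simpa [iHadamard_apply, Complex.I_ne_zero, hne k l] using h

variable [Fintype ι]

lemma tanU_apply [DecidableEq ι] (v : Matrix ι ι ℂ) : tanU u v = v * uᴴ + u * vᴴ := rfl

lemma tanMu_apply (v : Matrix ι ι ℂ) (p : ι × ι) :
    tanMu u v p = (v p.1 p.2 * starRingEnd ℂ (u p.1 p.2)).re := rfl

lemma ker_tanMu_eq_range_iHadamard (hne : ∀ k l, u k l ≠ 0) :
    LinearMap.ker (tanMu u) = LinearMap.range (iHadamard u) := by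
  ext v
  rw [LinearMap.mem_ker, LinearMap.mem_range]
  constructor
  · intro hv
    refine ⟨fun p => (v p.1 p.2 / u p.1 p.2).im, ?_⟩
    ext k l
    have hre : (v k l / u k l).re = 0 := by
      have h := congrFun hv (k, l)
      simp only [tanMu_apply, Complex.mul_re, Complex.conj_re, Complex.conj_im, Pi.zero_apply] at h
      rw [Complex.div_re, ← add_div]
      linear_combination h / Complex.normSq (u k l)
    have hquot : v k l / u k l = Complex.I * (v k l / u k l).im := by
      apply Complex.ext <;> simp [hre]
    rw [iHadamard_apply, ← hquot, div_mul_cancel₀ _ (hne k l)]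
  · rintro ⟨t, rfl⟩
    funext p
    simp [tanMu_apply, iHadamard_apply, mul_assoc, Complex.mul_conj, ← Complex.ofReal_mul]

lemma tanU_iHadamard [DecidableEq ι] (t : ι × ι → ℝ) :
    tanU u (iHadamard u t) = Complex.I • (CL u - DL u) (ofRealPi (ι × ι) t) := by
  ext k k'
  simp only [tanU_apply, Matrix.add_apply, Matrix.mul_apply, Matrix.conjTranspose_apply,
    Matrix.smul_apply, iHadamard_apply, CL_sub_DL_apply, ofRealPi_apply, smul_eq_mul,
    Finset.mul_sum, ← Finset.sum_add_distrib, Complex.star_def, map_mul, Complex.conj_I,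
    Complex.conj_ofReal]
  exact Finset.sum_congr rfl fun l _ => by ring

lemma comap_iHadamard_ker_tanU [DecidableEq ι] :
    (LinearMap.ker (tanU u)).comap (iHadamard u) = (LinearMap.ker (CL u - DL u)).realPoints := by
  ext t
  simp only [Submodule.mem_comap, LinearMap.mem_ker, tanU_iHadamard, smul_eq_zero,
    Complex.I_ne_zero, false_or]
  rfl

end Tangent

theorem stmt18_general (n : ℕ) (u : Matrix (Fin n) (Fin n) ℂ) (hne : ∀ k l, u k l ≠ 0) :
    Module.finrank ℝ ↥(LinearMap.ker (tanU u) ⊓ LinearMap.ker (tanMu u)) =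
      Module.finrank ℂ ↥(LinearMap.ker (CL u - DL u)) := by
  have hker : LinearMap.ker (tanU u) ⊓ LinearMap.ker (tanMu u) =
      ((LinearMap.ker (tanU u)).comap (iHadamard u)).map (iHadamard u) := by
    rw [Submodule.map_comap_eq, ker_tanMu_eq_range_iHadamard u hne, inf_comm]
  rw [hker, ← (Submodule.equivMapOfInjective _ (iHadamard_injective u hne) _).finrank_eq,
    comap_iHadamard_ker_tanU]
  exact Submodule.finrank_realPoints fun _ => star_mem_ker_CL_sub_DL u

/-- for a unitary matrix `u` with nonzero entries, the real dimension of the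
kernel of the tangent map `μ_{*u}` (the space of tangent vectors `v` at `u` to the unitary
group with `Re (v k l * conj (u k l)) = 0` for all `k, l`) equals the multiplicity of the
eigenvalue 1 of the Berezin transform `I_u`, i.e. the complex dimension of
`{f | C_u f = D_u f}`. -/
theorem stmt18 (n : ℕ) (hn : 1 ≤ n) (u : Matrix (Fin n) (Fin n) ℂ)
    (hu : u * uᴴ = 1) (hne : ∀ k l, u k l ≠ 0) :
    Module.finrank ℝ ↥(LinearMap.ker (tanU u) ⊓ LinearMap.ker (tanMu u)) =
      Module.finrank ℂ ↥(LinearMap.ker (CL u - DL u)) :=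
  stmt18_general n u hne
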